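/- arXiv:2201.09831 — 3 statements merged into one kernel-verified Lean document; each statement's English description precedes it below -/
import Mathlib

section
/- Let W₁ be the (p/2)×p matrix with entries (W₁)_{k,2k−1} = (W₁)_{k,2k} = 1/√2 and zeros elsewhere (p = 2^s). If T is a p×p Toeplitz matrix, then W₁ T W₁ᵀ is a (p/2)×(p/2) Toeplitz matrix. -/
set_option maxHeartbeats 1000000


open Matrix

lemma haar_sum {s : ℕ}
    (W1 : Matrix (Fin (2 ^ (s - 1))) (Fin (2 ^ s)) ℝ)
    (hW1 : ∀ (k : Fin (2 ^ (s - 1))) (j : Fin (2 ^ s)),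
      W1 k j = if (j : ℕ) = 2 * (k : ℕ) ∨ (j : ℕ) = 2 * (k : ℕ) + 1
        then 1 / Real.sqrt 2 else 0)
    (k : Fin (2 ^ (s - 1))) (a0 a1 : Fin (2 ^ s))
    (ha0 : (a0 : ℕ) = 2 * (k : ℕ)) (ha1 : (a1 : ℕ) = 2 * (k : ℕ) + 1)
    (f : Fin (2 ^ s) → ℝ) :
    ∑ a, W1 k a * f a = (1 / Real.sqrt 2) * (f a0 + f a1) := by
  rw [Finset.sum_eq_add_of_mem a0 a1 (Finset.mem_univ _) (Finset.mem_univ _)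
      (by intro h; have := congrArg Fin.val h; omega)
      (by
        intro c _ hc
        rw [hW1, if_neg]
        · ring
        · push_neg
          constructor
          · intro h; exact hc.1 (Fin.ext (by omega))
          · intro h; exact hc.2 (Fin.ext (by omega)))]
  rw [hW1, hW1, if_pos (Or.inl ha0), if_pos (Or.inr ha1)]
  ring

/-- Let `W₁` be the `(p/2) × p` low-pass Haar filter matrix
(rows `(1/√2)(e_{2k−1} + e_{2k})ᵀ`, written 0-indexed), with `p = 2^s`, `s ≥ 1`.
If `T` is a `p × p` Toeplitz matrix, then `W₁ T W₁ᵀ` is a `(p/2) × (p/2)`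
Toeplitz matrix. -/
theorem haar_lowpass_toeplitz {s : ℕ} (hs : 1 ≤ s)
    (W1 : Matrix (Fin (2 ^ (s - 1))) (Fin (2 ^ s)) ℝ)
    (hW1 : ∀ (k : Fin (2 ^ (s - 1))) (j : Fin (2 ^ s)),
      W1 k j = if (j : ℕ) = 2 * (k : ℕ) ∨ (j : ℕ) = 2 * (k : ℕ) + 1
        then 1 / Real.sqrt 2 else 0)
    (T : Matrix (Fin (2 ^ s)) (Fin (2 ^ s)) ℝ)
    (hT : ∃ t : ℤ → ℝ, ∀ i j : Fin (2 ^ s), T i j = t ((i : ℤ) - (j : ℤ))) :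
    ∃ t' : ℤ → ℝ, ∀ i j : Fin (2 ^ (s - 1)),
      (W1 * T * W1ᵀ) i j = t' ((i : ℤ) - (j : ℤ)) := by
  obtain ⟨t, ht⟩ := hT
  refine ⟨fun d => (1 / Real.sqrt 2) * ((1 / Real.sqrt 2) * (t (2 * d) + t (2 * d + 1))
      + (1 / Real.sqrt 2) * (t (2 * d - 1) + t (2 * d))), fun i j => ?_⟩
  have h2 : 2 ^ s = 2 * 2 ^ (s - 1) := by
    conv_lhs => rw [show s = (s - 1) + 1 from (Nat.succ_pred_eq_of_pos hs).symm]
    ring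
  have hi := i.2
  have hj := j.2
  set i0 : Fin (2 ^ s) := ⟨2 * (i : ℕ), by omega⟩ with hi0
  set i1 : Fin (2 ^ s) := ⟨2 * (i : ℕ) + 1, by omega⟩ with hi1
  set j0 : Fin (2 ^ s) := ⟨2 * (j : ℕ), by omega⟩ with hj0
  set j1 : Fin (2 ^ s) := ⟨2 * (j : ℕ) + 1, by omega⟩ with hj1
  have hm : (W1 * T * W1ᵀ) i j = ∑ b, W1 j b * (∑ a, W1 i a * T a b) := by
    simp only [Matrix.mul_apply, Matrix.transpose_apply]
    apply Finset.sum_congr rfl; intro b _; ring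
  rw [hm, haar_sum W1 hW1 j j0 j1 rfl rfl (fun b => ∑ a, W1 i a * T a b),
      haar_sum W1 hW1 i i0 i1 rfl rfl (fun a => T a j0),
      haar_sum W1 hW1 i i0 i1 rfl rfl (fun a => T a j1)]
  simp only [ht]
  have e1 : ((i0 : ℕ) : ℤ) - ((j0 : ℕ) : ℤ) = 2 * ((i : ℤ) - (j : ℤ)) := by
    simp [hi0, hj0]; push_cast; ring
  have e2 : ((i1 : ℕ) : ℤ) - ((j0 : ℕ) : ℤ) = 2 * ((i : ℤ) - (j : ℤ)) + 1 := by
    simp [hi1, hj0]; push_cast; ring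
  have e3 : ((i0 : ℕ) : ℤ) - ((j1 : ℕ) : ℤ) = 2 * ((i : ℤ) - (j : ℤ)) - 1 := by
    simp [hi0, hj1]; push_cast; ring
  have e4 : ((i1 : ℕ) : ℤ) - ((j1 : ℕ) : ℤ) = 2 * ((i : ℤ) - (j : ℤ)) := by
    simp [hi1, hj1]; push_cast; ring
  rw [e1, e2, e3, e4]
end

section
/- Let W₁ be the (p/2)×p low-pass Haar filter matrix (p = 2^s). If C is a p×p circulant matrix, then W₁ C W₁ᵀ is a (p/2)×(p/2) circulant matrix. -/
/-!
If `W k a = w (a - φ k)` and `C a b = c (b - a)` with indices read in `ZMod p`, then the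
substitution `a = φ i + x`, `b = φ j + y` gives
`(W C Vᵀ) i j = ∑ x y, w x * c (φ j - φ i + y - x) * v y`, a function of `φ (j - i)` as soon as
`φ : ZMod m →+ ZMod p` is additive. The Haar low-pass filter is of this form with `p = 2 m`,
`φ` multiplication by `2` and `w = (1/√2) · 1_{0,1}`.
-/

open Matrix

namespace ZMod

theorem sum_fin_natCast {M : Type*} [AddCommMonoid M] (p : ℕ) [NeZero p] (f : ZMod p → M) :
    ∑ a : Fin p, f ((a : ℕ) : ZMod p) = ∑ x : ZMod p, f x := by
  refine Fintype.sum_bijective _ ⟨fun a b hab => ?_, fun x => ⟨⟨x.val, x.val_lt⟩, natCast_zmod_val x⟩⟩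
    _ _ fun _ => rfl
  rw [natCast_eq_natCast_iff', Nat.mod_eq_of_lt a.isLt, Nat.mod_eq_of_lt b.isLt] at hab
  exact Fin.ext hab

theorem natCast_sub_natCast_eq_natCast_iff {p j n e : ℕ} (hj : j < p) (he : n + e < p) :
    (j : ZMod p) - n = e ↔ j = n + e := by
  rw [sub_eq_iff_eq_add', ← Nat.cast_add, natCast_eq_natCast_iff', Nat.mod_eq_of_lt hj,
    Nat.mod_eq_of_lt he]

theorem eq_two_mul_or_eq_two_mul_add_one_iff {p j k : ℕ} (hj : j < p) (hk : 2 * k + 1 < p) :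
    (j = 2 * k ∨ j = 2 * k + 1) ↔ ((j : ZMod p) - 2 * k = 0 ∨ (j : ZMod p) - 2 * k = 1) := by
  have h0 := natCast_sub_natCast_eq_natCast_iff (e := 0) hj (by omega : 2 * k + 0 < p)
  have h1 := natCast_sub_natCast_eq_natCast_iff hj hk
  push_cast at h0 h1
  rw [h0, h1, add_zero]

def scaleHom {m p : ℕ} (k : ℕ) (h : p ∣ k * m) : ZMod m →+ ZMod p :=
  lift m ⟨(AddMonoidHom.mulLeft (k : ZMod p)).comp (Int.castAddHom _), by
    simpa [← Nat.cast_mul] using (natCast_eq_zero_iff _ _).2 h⟩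

@[simp]
theorem scaleHom_natCast {m p : ℕ} (k : ℕ) (h : p ∣ k * m) (n : ℕ) :
    scaleHom k h n = k * n := by
  rw [scaleHom, ← Int.cast_natCast (R := ZMod m), lift_coe]
  simp

end ZMod

def Matrix.IsCirculant {n : ℕ} {R : Type*} (M : Matrix (Fin n) (Fin n) R) : Prop :=
  ∃ c : ZMod n → R, ∀ i j : Fin n, M i j = c (((j : ℕ) : ZMod n) - ((i : ℕ) : ZMod n))

namespace Matrix

variable {R : Type*} [Semiring R]

theorem mul_mul_transpose_apply_of_translate {ι : Type*} {p : ℕ} [NeZero p] (σ : ι → ZMod p)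
    (w v c : ZMod p → R) (W V : Matrix ι (Fin p) R) (C : Matrix (Fin p) (Fin p) R)
    (hW : ∀ i a, W i a = w ((a : ℕ) - σ i)) (hV : ∀ i a, V i a = v ((a : ℕ) - σ i))
    (hC : ∀ a b : Fin p, C a b = c ((b : ℕ) - (a : ℕ))) (i j : ι) :
    (W * C * Vᵀ) i j = ∑ y, ∑ x, w x * c (σ j - σ i + y - x) * v y := by
  calc (W * C * Vᵀ) i j
      = ∑ b : Fin p, ∑ a : Fin p,
          w ((a : ℕ) - σ i) * c ((b : ℕ) - (a : ℕ)) * v ((b : ℕ) - σ j) := by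
        simp only [mul_apply, transpose_apply, hW, hV, hC, Finset.sum_mul]
    _ = ∑ y, ∑ x, w (x - σ i) * c (y - x) * v (y - σ j) := by
        simp only [← ZMod.sum_fin_natCast p]
    _ = ∑ y, ∑ x, w x * c (σ j - σ i + y - x) * v y := by
        refine Fintype.sum_equiv (Equiv.subRight (σ j)) _ _ fun y => ?_
        refine Fintype.sum_equiv (Equiv.subRight (σ i)) _ _ fun x => ?_
        rw [Equiv.subRight_apply, Equiv.subRight_apply,
          show σ j - σ i + (y - σ j) - (x - σ i) = y - x by abel]

theorem IsCirculant.mul_mul_transpose {m p : ℕ} [NeZero p] {C : Matrix (Fin p) (Fin p) R}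
    {φ : ZMod m →+ ZMod p} {w v : ZMod p → R} {W V : Matrix (Fin m) (Fin p) R} (hC : C.IsCirculant)
    (hW : ∀ i a, W i a = w ((a : ℕ) - φ (i : ℕ))) (hV : ∀ i a, V i a = v ((a : ℕ) - φ (i : ℕ))) :
    (W * C * Vᵀ).IsCirculant := by
  obtain ⟨c, hc⟩ := hC
  refine ⟨fun d => ∑ y, ∑ x, w x * c (φ d + y - x) * v y, fun i j => ?_⟩
  rw [mul_mul_transpose_apply_of_translate _ w v c W V C hW hV hc]
  simp only [map_sub]

end Matrix

/-- Let `W₁` be the `(p/2) × p` low-pass Haar filter matrix with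
`p = 2^s`, `s ≥ 1`. If `C` is a `p × p` circulant matrix
(`C i j = c ((j − i) mod p)`), then `W₁ C W₁ᵀ` is a `(p/2) × (p/2)` circulant
matrix. -/
theorem haar_lowpass_circulant {s : ℕ} (hs : 1 ≤ s)
    (W1 : Matrix (Fin (2 ^ (s - 1))) (Fin (2 ^ s)) ℝ)
    (hW1 : ∀ (k : Fin (2 ^ (s - 1))) (j : Fin (2 ^ s)),
      W1 k j = if (j : ℕ) = 2 * (k : ℕ) ∨ (j : ℕ) = 2 * (k : ℕ) + 1
        then 1 / Real.sqrt 2 else 0)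
    (C : Matrix (Fin (2 ^ s)) (Fin (2 ^ s)) ℝ)
    (hC : ∃ c : ZMod (2 ^ s) → ℝ, ∀ i j : Fin (2 ^ s),
      C i j = c (((j : ℕ) : ZMod (2 ^ s)) - ((i : ℕ) : ZMod (2 ^ s)))) :
    ∃ c' : ZMod (2 ^ (s - 1)) → ℝ, ∀ i j : Fin (2 ^ (s - 1)),
      (W1 * C * W1ᵀ) i j =
        c' (((j : ℕ) : ZMod (2 ^ (s - 1))) - ((i : ℕ) : ZMod (2 ^ (s - 1)))) := by
  have hp : 2 ^ s = 2 * 2 ^ (s - 1) := by rw [← pow_succ']; congr 1; omega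
  let w : ZMod (2 ^ s) → ℝ := fun x => if x = 0 ∨ x = 1 then 1 / Real.sqrt 2 else 0
  have hW : ∀ k j,
      W1 k j = w (((j : ℕ) : ZMod (2 ^ s)) - ZMod.scaleHom 2 (dvd_of_eq hp) (k : ℕ)) := by
    intro k j
    rw [hW1, ZMod.scaleHom_natCast, Nat.cast_ofNat]
    exact if_congr (ZMod.eq_two_mul_or_eq_two_mul_add_one_iff j.isLt (by omega)) rfl rfl
  exact Matrix.IsCirculant.mul_mul_transpose hC hW hW
end

section
/- For A ∈ ℝ^{m×n}, b ∈ ℝ^m, and λ > 0, the norm of the Tikhonov solution ‖x_λ‖₂, with x_λ = (AᵀA + λ²I)⁻¹Aᵀb, is a nonincreasing function of λ on (0, ∞). -/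
/-!
Write `x_λ` for the Tikhonov solution, so that `(AᵀA + λ²I) x_λ = Aᵀb`. For `0 < p < q`,
subtracting the two normal equations gives `AᵀA (x_p - x_q) = q² x_q - p² x_p`, and pairing with
`x_p - x_q` yields `(p² + q²) ⟪x_p, x_q⟫ ≥ p² ‖x_p‖² + q² ‖x_q‖²` because `AᵀA` is positive
semidefinite. Bounding `2 ⟪x_p, x_q⟫ ≤ ‖x_p‖² + ‖x_q‖²` turns this into
`(q² - p²) (‖x_p‖² - ‖x_q‖²) ≥ 0`.
-/

open Matrix

namespace Matrix.PosSemidef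

variable {ι : Type*} [DecidableEq ι] {M : Matrix ι ι ℝ}

lemma posDef_add_smul_one (hM : M.PosSemidef) {r : ℝ} (hr : 0 < r) : (M + r • 1).PosDef :=
  PosDef.posSemidef_add hM (PosDef.one.smul hr)

variable [Fintype ι]

lemma dotProduct_self_le_of_add_smul_one_mulVec_eq (hM : M.PosSemidef) {s t : ℝ}
    (hs : 0 ≤ s) (hst : s < t) {u v c : ι → ℝ}
    (hu : (M + s • 1) *ᵥ u = c) (hv : (M + t • 1) *ᵥ v = c) : v ⬝ᵥ v ≤ u ⬝ᵥ u := by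
  have hdiff : M *ᵥ (u - v) = t • v - s • u := by
    have h := hu.trans hv.symm
    simp only [add_mulVec, smul_mulVec, one_mulVec] at h
    rw [mulVec_sub]
    linear_combination (norm := module) h
  have hmono : 0 ≤ (u - v) ⬝ᵥ (M *ᵥ (u - v)) := by
    simpa using hM.dotProduct_mulVec_nonneg (u - v)
  have hsq : 0 ≤ (u - v) ⬝ᵥ (u - v) := by simpa using dotProduct_self_star_nonneg (u - v)
  rw [hdiff] at hmono
  simp only [dotProduct_sub, sub_dotProduct, dotProduct_smul, smul_eq_mul,
    dotProduct_comm v u] at hmono hsq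
  nlinarith [mul_nonneg (add_nonneg hs (hs.trans hst.le)) hsq]

lemma dotProduct_self_inv_add_smul_one_mulVec_antitoneOn (hM : M.PosSemidef) (c : ι → ℝ) :
    AntitoneOn (fun r : ℝ => ((M + r • 1)⁻¹ *ᵥ c) ⬝ᵥ ((M + r • 1)⁻¹ *ᵥ c)) (Set.Ioi 0) := by
  have hsolve : ∀ r : ℝ, 0 < r → (M + r • 1) *ᵥ ((M + r • 1)⁻¹ *ᵥ c) = c := fun r hr => by
    have hdet := (isUnit_iff_isUnit_det _).mp (hM.posDef_add_smul_one hr).isUnit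
    rw [mulVec_mulVec, mul_nonsing_inv _ hdet, one_mulVec]
  intro s hs t ht hst
  rcases hst.eq_or_lt with rfl | hlt
  · rfl
  · exact hM.dotProduct_self_le_of_add_smul_one_mulVec_eq (le_of_lt hs) hlt
      (hsolve s hs) (hsolve t ht)

end Matrix.PosSemidef

/-- For `A ∈ ℝ^{m×n}`, `b ∈ ℝ^m`, and `λ > 0`, the norm of the
Tikhonov solution `x_λ = (AᵀA + λ²I)⁻¹ Aᵀ b` is a nonincreasing function of `λ`
on `(0, ∞)`. -/
theorem tikhonov_solution_norm_nonincreasing {m n : ℕ}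
    (A : Matrix (Fin m) (Fin n) ℝ) (b : Fin m → ℝ)
    (x : ℝ → Fin n → ℝ)
    (hx : ∀ lam : ℝ, x lam =
      ((Aᵀ * A + lam ^ 2 • (1 : Matrix (Fin n) (Fin n) ℝ))⁻¹).mulVec (Aᵀ.mulVec b)) :
    AntitoneOn (fun lam => Real.sqrt (∑ j, x lam j ^ 2)) (Set.Ioi (0 : ℝ)) := by
  have hAA : (Aᵀ * A).PosSemidef := by simpa using posSemidef_conjTranspose_mul_self A
  have hsum_sq : ∀ v : Fin n → ℝ, ∑ j, v j ^ 2 = v ⬝ᵥ v := fun v => by simp [dotProduct, sq]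
  intro p hp q hq hpq
  simp only [hsum_sq, hx]
  exact Real.sqrt_le_sqrt <|
    hAA.dotProduct_self_inv_add_smul_one_mulVec_antitoneOn (Aᵀ *ᵥ b)
      (pow_pos (Set.mem_Ioi.mp hp) 2) (pow_pos (Set.mem_Ioi.mp hq) 2)
      (pow_le_pow_left₀ (le_of_lt hp) hpq 2)
end
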